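/- Let P_1 be the all-positive signed Petersen graph (every edge has sign +1). For every nonnegative integer k, the number of zero-free proper k-colorings of P_1 equals 1024k^10 - 7680k^9 + 26880k^8 - 58240k^7 + 86592k^6 - 91552k^5 + 68400k^4 - 34440k^3 + 10424k^2 - 1408k. -/

import Mathlib

/-- The edges of the Petersen graph on vertices `0, …, 4` (outer vertices `u_0, …, u_4`)
and `5, …, 9` (inner vertices `v_0, …, v_4`): outer edges `u_i u_(i+1)`, inner pentagram
edges `v_i v_(i+2)` (indices mod 5), and spokes `u_i v_i`. -/
def petersenEdges : List (Fin 10 × Fin 10) :=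
  [(0, 1), (1, 2), (2, 3), (3, 4), (4, 0),
   (5, 7), (6, 8), (7, 9), (8, 5), (9, 6),
   (0, 5), (1, 6), (2, 7), (3, 8), (4, 9)]

/-- The negative edges of the signed Petersen graph `P1`; all other edges are positive. -/
def negEdges : List (Fin 10 × Fin 10) := []

/-- The sign of an edge of `P1`. -/
def sign (e : Fin 10 × Fin 10) : ℤ := if e ∈ negEdges then -1 else 1


/-!
Every edge of `P1` is positive, so a zero-free proper `k`-colouring is just a proper colouring of
the Petersen graph with the `2k` colours `±1, …, ±k`. Their number is the chromatic polynomial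
of the Petersen graph evaluated at `2k`, which deletion–contraction computes symbolically.
-/

open Finset

/-- Subtraction of integer polynomials given by their lists of coefficients, constant first. -/
def coeffSub : List ℤ → List ℤ → List ℤ
  | [], q => q.map Neg.neg
  | p, [] => p
  | a :: p, c :: q => (a - c) :: coeffSub p q

def coeffEval (n : ℤ) : List ℤ → ℤ
  | [] => 0
  | a :: p => a + n * coeffEval n p

theorem coeffEval_coeffSub (n : ℤ) :
    ∀ p q, coeffEval n (coeffSub p q) = coeffEval n p - coeffEval n q
  | [], [] => by simp [coeffSub, coeffEval]
  | [], c :: q => by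
    have ih := coeffEval_coeffSub n [] q
    simp only [coeffSub, coeffEval, List.map_cons] at ih ⊢
    linear_combination n * ih
  | a :: p, [] => by simp [coeffSub, coeffEval]
  | a :: p, c :: q => by
    simp only [coeffSub, coeffEval, coeffEval_coeffSub n p q]
    ring

theorem coeffEval_monomial (n : ℤ) (m : ℕ) : coeffEval n (List.replicate m 0 ++ [1]) = n ^ m := by
  induction m with
  | zero => simp [coeffEval]
  | succ m ih => simp [List.replicate_succ, coeffEval, ih, pow_succ, mul_comm]

section Contraction

variable {V : Type*} [DecidableEq V]

def contract (a b v : V) : V := if v = b then a else v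

theorem update_comp_contract {α : Type*} {a b : V} (hab : a ≠ b) {x : V → α} (hx : x a = x b)
    (c : α) : Function.update x b c ∘ contract a b = x := by
  funext v
  by_cases hv : v = b
  · simp [contract, hv, hab, hx]
  · simp [contract, hv]

theorem contract_mem_erase {s : Finset V} {a b v : V} (hab : a ≠ b) (ha : a ∈ s) (hv : v ∈ s) :
    contract a b v ∈ s.erase b := by
  unfold contract
  split_ifs with hvb
  · exact mem_erase.2 ⟨hab, ha⟩
  · exact mem_erase.2 ⟨hvb, hv⟩

end Contraction

section Colorings

variable {V α : Type*} [Fintype V] [DecidableEq V] [Inhabited α]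

/-- The colours allowed at `v` when colouring the graph with vertex set `s` from `S`: vertices
outside `s` all get the dummy colour `default`, so that colourings of every vertex set are
functions on the whole of `V`. -/
def palette (S : Finset α) (s : Finset V) (v : V) : Finset α := if v ∈ s then S else {default}

theorem palette_univ (S : Finset α) : palette S (univ : Finset V) = fun _ => S := by
  funext v
  simp [palette]

variable [DecidableEq α]

def properColorings (S : Finset α) (s : Finset V) (E : List (V × V)) : Finset (V → α) :=
  (Fintype.piFinset (palette S s)).filter fun x => ∀ e ∈ E, x e.1 ≠ x e.2

variable {S : Finset α} {s : Finset V} {E : List (V × V)}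

theorem mem_properColorings {x : V → α} :
    x ∈ properColorings S s E ↔
      (∀ v, (v ∈ s → x v ∈ S) ∧ (v ∉ s → x v = default)) ∧ ∀ e ∈ E, x e.1 ≠ x e.2 := by
  simp only [properColorings, mem_filter, Fintype.mem_piFinset, palette]
  refine and_congr_left' (forall_congr' fun v => ?_)
  split_ifs with hv <;> simp [hv]

theorem card_properColorings_nil : #(properColorings S s []) = #S ^ #s := by
  rw [properColorings, filter_true_of_mem (by simp), Fintype.card_piFinset]
  simp only [palette, apply_ite Finset.card, card_singleton]
  rw [prod_ite_mem, univ_inter, prod_const]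

theorem properColorings_cons_self (a : V) : properColorings S s ((a, a) :: E) = ∅ :=
  filter_eq_empty_iff.2 fun _ _ h => h (a, a) List.mem_cons_self rfl

theorem card_properColorings_cons_add_card_filter (a b : V) :
    #(properColorings S s ((a, b) :: E)) + #((properColorings S s E).filter fun x => x a = x b)
      = #(properColorings S s E) := by
  have hcons : properColorings S s ((a, b) :: E)
      = (properColorings S s E).filter fun x => x a ≠ x b := by
    rw [properColorings, properColorings, filter_filter]
    simp only [List.forall_mem_cons, and_comm]
  rw [hcons, add_comm]
  exact card_filter_add_card_filter_not _

/-- Colourings with `x a = x b` are the colourings of the graph in which `b` is contracted into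
`a`: forget the colour of `b`, respectively copy the colour of `a` to it. -/
theorem card_filter_eq_card_properColorings_contract {a b : V} (hab : a ≠ b) (ha : a ∈ s)
    (hb : b ∈ s) :
    #((properColorings S s E).filter fun x => x a = x b)
      = #(properColorings S (s.erase b) (E.map (Prod.map (contract a b) (contract a b)))) := by
  refine card_nbij' (fun x => Function.update x b default) (fun y => y ∘ contract a b)
    (fun x hx => ?_) (fun y hy => ?_) (fun x hx => ?_) (fun y hy => ?_)
  · rw [mem_coe, mem_filter, mem_properColorings] at hx
    obtain ⟨⟨hxS, hxE⟩, hxab⟩ := hx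
    rw [mem_coe, mem_properColorings]
    refine ⟨fun v => ?_, ?_⟩
    · by_cases hv : v = b
      · subst hv; simp
      · simpa only [Function.update_of_ne hv, mem_erase, ne_eq, hv, not_false_eq_true,
          true_and] using hxS v
    · have hcomp : ∀ v, Function.update x b default (contract a b v) = x v :=
        congrFun (update_comp_contract hab hxab default)
      simpa only [List.forall_mem_map, Prod.map_fst, Prod.map_snd, hcomp] using hxE
  · rw [mem_coe, mem_properColorings] at hy
    obtain ⟨hyS, hyE⟩ := hy
    rw [mem_coe, mem_filter, mem_properColorings]
    refine ⟨⟨fun v => ⟨fun hv => ?_, fun hv => ?_⟩, fun e he => hyE _ (List.mem_map_of_mem he)⟩, ?_⟩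
    · exact (hyS _).1 (contract_mem_erase hab ha hv)
    · have hvb : v ≠ b := by rintro rfl; exact hv hb
      simpa [contract, hvb, hv] using hyS v
    · simp [contract, hab]
  · exact update_comp_contract hab (mem_filter.1 hx).2 default
  · have hyb : y b = default := by
      rw [mem_coe, mem_properColorings] at hy
      simpa using (hy.1 b).2
    funext v
    by_cases hv : v = b
    · subst hv; simp [hyb]
    · simp [contract, hv]

end Colorings

section DeletionContraction

variable {V : Type*} [DecidableEq V]

/-- Coefficients of the chromatic polynomial of a graph with `m` vertices and edge list `E`. The fuel (any bound on `E.length`) keeps the recursion structural, so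
that `decide` can evaluate it. -/
def chromaticCoeffs : ℕ → List (V × V) → ℕ → List ℤ
  | _, [], m => List.replicate m 0 ++ [1]
  | 0, _ :: _, _ => []
  | fuel + 1, (a, b) :: E, m =>
      if a = b then [] else
        coeffSub (chromaticCoeffs fuel E m)
          (chromaticCoeffs fuel (E.map (Prod.map (contract a b) (contract a b))) (m - 1))

theorem card_properColorings_eq_coeffEval [Fintype V] {α : Type*} [DecidableEq α] [Inhabited α]
    (S : Finset α) :
    ∀ (fuel : ℕ) (E : List (V × V)) (s : Finset V), E.length ≤ fuel →
      (∀ e ∈ E, e.1 ∈ s ∧ e.2 ∈ s) →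
      (#(properColorings S s E) : ℤ) = coeffEval #S (chromaticCoeffs fuel E #s)
  | _, [], s, _, _ => by
    rw [card_properColorings_nil, chromaticCoeffs, coeffEval_monomial]
    push_cast; rfl
  | fuel + 1, (a, b) :: E, s, hlen, hE => by
    rw [chromaticCoeffs]
    split_ifs with hab
    · subst hab
      simp [properColorings_cons_self, coeffEval]
    · obtain ⟨⟨ha, hb⟩, hE⟩ := List.forall_mem_cons.1 hE
      have hlen : E.length ≤ fuel := Nat.le_of_succ_le_succ hlen
      have hdel := card_properColorings_eq_coeffEval S fuel E s hlen hE
      have hcon := card_properColorings_eq_coeffEval S fuel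
        (E.map (Prod.map (contract a b) (contract a b))) (s.erase b) (by simpa using hlen)
        (by
          simp only [List.mem_map, Prod.exists, Prod.map, forall_exists_index, and_imp]
          rintro _ u v huv rfl
          exact ⟨contract_mem_erase hab ha (hE _ huv).1, contract_mem_erase hab ha (hE _ huv).2⟩)
      have hsplit := card_properColorings_cons_add_card_filter (S := S) (s := s) (E := E) a b
      rw [card_filter_eq_card_properColorings_contract hab ha hb] at hsplit
      rw [card_erase_of_mem hb] at hcon
      rw [coeffEval_coeffSub, ← hdel, ← hcon, ← hsplit]
      push_cast; ring

end DeletionContraction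

theorem chromaticCoeffs_petersen : chromaticCoeffs 15 petersenEdges 10 =
    [0, -704, 2606, -4305, 4275, -2861, 1353, -455, 105, -15, 1] := by
  decide

theorem card_zeroFree_colors (k : ℕ) : #((Icc (-(k : ℤ)) k).erase 0) = 2 * k := by
  rw [card_erase_of_mem (by simp), Int.card_Icc]
  omega

theorem petersen_zeroFree_chromatic_P1 (k : ℕ) :
    (((Fintype.piFinset fun _ : Fin 10 => ((Finset.Icc (-(k : ℤ)) (k : ℤ)).erase 0)).filter
        fun x : Fin 10 → ℤ => ∀ e ∈ petersenEdges, x e.1 ≠ sign e * x e.2).card : ℤ)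
      = 1024 * (k : ℤ)^10 - 7680 * (k : ℤ)^9 + 26880 * (k : ℤ)^8 - 58240 * (k : ℤ)^7 + 86592 * (k : ℤ)^6 - 91552 * (k : ℤ)^5 + 68400 * (k : ℤ)^4 - 34440 * (k : ℤ)^3 + 10424 * (k : ℤ)^2 - 1408 * (k : ℤ) := by
  have hcolorings : ((Fintype.piFinset fun _ : Fin 10 => (Icc (-(k : ℤ)) k).erase 0).filter
        fun x : Fin 10 → ℤ => ∀ e ∈ petersenEdges, x e.1 ≠ sign e * x e.2)
      = properColorings ((Icc (-(k : ℤ)) k).erase 0) univ petersenEdges := by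
    simp [properColorings, palette_univ, sign, negEdges]
  rw [hcolorings, card_properColorings_eq_coeffEval _ 15 petersenEdges univ (by decide) (by simp),
    card_univ, Fintype.card_fin, chromaticCoeffs_petersen, card_zeroFree_colors]
  simp only [coeffEval]
  push_cast
  ring
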